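/- Let r ≥ 1 be an integer and λ ∈ (−1/2, 0). Then for every integer k with 0 ≤ k ≤ r−1, setting t_k = cos((2k+1)π/(2r+1)) (a point of local minimum of the Chebyshev polynomial T_{2r+1}), one has q_{2r+1}(t_k, λ) < 0, where q_{2r+1}(t,λ) = 1 + t · Σ_{s=0}^{r} (−1)^s · binom(r,s) · ((λ+r+1)_s/(λ+1/2)_s) · (1−t²)^s. -/

import Mathlib

open Real Finset

/-- Pochhammer symbol (z)_n = z(z+1)...(z+n-1), with (z)_0 = 1. -/
noncomputable def poch (z : ℝ) (n : ℕ) : ℝ := ∏ i ∈ Finset.range n, (z + i)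

/-- The polynomial q_{2r+1}(t, lambda). -/
noncomputable def qOdd (r : ℕ) (l : ℝ) (t : ℝ) : ℝ :=
  1 + t * ∑ s ∈ Finset.range (r + 1), (-1 : ℝ) ^ s * (r.choose s : ℝ) *
    (poch (l + r + 1) s / poch (l + 1 / 2) s) * (1 - t ^ 2) ^ s

/-! ### Pochhammer basics -/

lemma poch_zero (z : ℝ) : poch z 0 = 1 := by simp [poch]

lemma poch_succ (z : ℝ) (n : ℕ) : poch z (n + 1) = poch z n * (z + n) := by
  simp [poch, Finset.prod_range_succ]

lemma poch_one (z : ℝ) : poch z 1 = z := by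
  rw [show (1:ℕ) = 0 + 1 from rfl, poch_succ, poch_zero]
  simp

lemma poch_succ_left (z : ℝ) (n : ℕ) : poch z (n + 1) = z * poch (z + 1) n := by
  induction n with
  | zero => simp [poch]
  | succ m ih =>
    rw [poch_succ, ih, poch_succ]
    push_cast
    ring

lemma poch_base_mul (z : ℝ) (s : ℕ) : z * poch (z + 1) s = poch z s * (z + s) := by
  rw [← poch_succ_left, poch_succ]

lemma poch_pos {z : ℝ} (hz : 0 < z) (n : ℕ) : 0 < poch z n := by
  unfold poch
  exact Finset.prod_pos fun i _ => by positivity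

lemma poch_ne_zero {z : ℝ} (hz : 0 < z) (n : ℕ) : poch z n ≠ 0 := (poch_pos hz n).ne'

lemma poch_neg {l : ℝ} (hl2 : l < 0) (hl : -1 < l) (n : ℕ) : poch l (n + 1) < 0 := by
  rw [poch_succ_left]
  have : 0 < poch (l + 1) n := poch_pos (by linarith) n
  exact mul_neg_of_neg_of_pos hl2 this

/-! ### The cosine-expansion coefficients -/

noncomputable def acoef (l : ℝ) (n j : ℕ) : ℝ :=
  poch l j * poch l (n - j) / (j.factorial * (n - j).factorial)

lemma acoef_rec (l : ℝ) (n i : ℕ) (hi : i ≤ n) :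
    ((n:ℝ)+2) * acoef l (n+2) (i+1) =
    ((n:ℝ)+1+l) * (acoef l (n+1) (i+1) + acoef l (n+1) i) - ((n:ℝ)+2*l) * acoef l n i := by
  have e1 : n + 2 - (i+1) = (n - i) + 1 := by omega
  have e2 : n + 1 - (i+1) = n - i := by omega
  have e3 : n + 1 - i = (n - i) + 1 := by omega
  unfold acoef
  rw [e1, e2, e3, poch_succ l i, poch_succ l (n-i), Nat.factorial_succ i,
    Nat.factorial_succ (n-i)]
  have hc : ((n - i : ℕ) : ℝ) = (n : ℝ) - i := by
    rw [Nat.cast_sub hi]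
  push_cast [hc]
  have h1 : (i.factorial : ℝ) ≠ 0 := Nat.cast_ne_zero.2 i.factorial_ne_zero
  have h2 : ((n-i).factorial : ℝ) ≠ 0 := Nat.cast_ne_zero.2 (n-i).factorial_ne_zero
  have h3 : (i : ℝ) + 1 ≠ 0 := by positivity
  have h4 : (n : ℝ) - i + 1 ≠ 0 := by
    have : (i:ℝ) ≤ n := by exact_mod_cast hi
    linarith
  field_simp
  ring

lemma acoef_left (l : ℝ) (n : ℕ) :
    ((n:ℝ)+2) * acoef l (n+2) 0 = ((n:ℝ)+1+l) * acoef l (n+1) 0 := by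
  unfold acoef
  simp only [Nat.sub_zero, Nat.factorial_zero]
  rw [poch_succ l (n+1)]
  have h2 : ((n+1).factorial : ℝ) ≠ 0 := Nat.cast_ne_zero.2 (n+1).factorial_ne_zero
  rw [Nat.factorial_succ (n+1)]
  push_cast
  field_simp
  ring

lemma acoef_right (l : ℝ) (n : ℕ) :
    ((n:ℝ)+2) * acoef l (n+2) (n+2) = ((n:ℝ)+1+l) * acoef l (n+1) (n+1) := by
  unfold acoef
  simp only [Nat.sub_self, Nat.factorial_zero]
  rw [poch_succ l (n+1)]
  have h2 : ((n+1).factorial : ℝ) ≠ 0 := Nat.cast_ne_zero.2 (n+1).factorial_ne_zero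
  rw [Nat.factorial_succ (n+1)]
  push_cast
  field_simp
  ring

/-! ### The cosine sums -/

noncomputable def Xc (l : ℝ) (n : ℕ) (θ : ℝ) : ℝ :=
  ∑ j ∈ Finset.range (n+1), acoef l n j * Real.cos (((n:ℝ) - 2*j) * θ)

lemma rec_X (l : ℝ) (n : ℕ) (θ : ℝ) :
    ((n:ℝ)+2) * Xc l (n+2) θ
      = 2*((n:ℝ)+1+l) * Real.cos θ * Xc l (n+1) θ - ((n:ℝ)+2*l) * Xc l n θ := by
  set c : ℕ → ℝ := fun j => Real.cos (((n:ℝ) + 2 - 2*(j:ℝ)) * θ) with hc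
  have hX2 : Xc l (n+2) θ = ∑ j ∈ Finset.range (n+3), acoef l (n+2) j * c j := by
    unfold Xc
    apply Finset.sum_congr rfl
    intro j _
    congr 2
    push_cast
    ring
  have hX0 : Xc l n θ = ∑ j ∈ Finset.range (n+1), acoef l n j * c (j+1) := by
    unfold Xc
    apply Finset.sum_congr rfl
    intro j _
    congr 2
    push_cast
    ring
  have hcos : ∀ j : ℕ, 2 * Real.cos θ * Real.cos ((((n+1:ℕ):ℝ) - 2*(j:ℝ)) * θ)
      = c j + c (j+1) := by
    intro j
    have h1 : ((n:ℝ) + 2 - 2*(j:ℝ)) * θ = (((n+1:ℕ):ℝ) - 2*(j:ℝ)) * θ + θ := by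
      push_cast; ring
    have h2 : ((n:ℝ) + 2 - 2*((j:ℝ)+1)) * θ = (((n+1:ℕ):ℝ) - 2*(j:ℝ)) * θ - θ := by
      push_cast; ring
    simp only [hc]
    push_cast
    push_cast at h1 h2
    rw [h1, h2, Real.cos_add, Real.cos_sub]
    ring
  have hX1 : 2 * Real.cos θ * Xc l (n+1) θ
      = ∑ j ∈ Finset.range (n+2), acoef l (n+1) j * (c j + c (j+1)) := by
    unfold Xc
    rw [Finset.mul_sum]
    apply Finset.sum_congr rfl
    intro j _
    rw [← hcos j]
    ring
  have key : 2*((n:ℝ)+1+l) * Real.cos θ * Xc l (n+1) θ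
      = ((n:ℝ)+1+l) * ∑ j ∈ Finset.range (n+2), acoef l (n+1) j * (c j + c (j+1)) := by
    rw [← hX1]; ring
  rw [hX2, hX0, key, Finset.mul_sum, Finset.mul_sum]
  have e1 : ∑ j ∈ Finset.range (n+3), ((n:ℝ)+2) * (acoef l (n+2) j * c j)
      = (∑ j ∈ Finset.range (n+1), ((n:ℝ)+2) * (acoef l (n+2) (j+1) * c (j+1)))
        + ((n:ℝ)+2) * (acoef l (n+2) 0 * c 0)
        + ((n:ℝ)+2) * (acoef l (n+2) (n+2) * c (n+2)) := by
    rw [show n+3 = (n+2)+1 from rfl, Finset.sum_range_succ, Finset.sum_range_succ']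
  have e2 : ∑ j ∈ Finset.range (n+2), ((n:ℝ)+1+l) * (acoef l (n+1) j * (c j + c (j+1)))
      = (∑ j ∈ Finset.range (n+1),
          (((n:ℝ)+1+l) * (acoef l (n+1) (j+1) * c (j+1))
            + ((n:ℝ)+1+l) * (acoef l (n+1) j * c (j+1))))
        + ((n:ℝ)+1+l) * (acoef l (n+1) 0 * c 0)
        + ((n:ℝ)+1+l) * (acoef l (n+1) (n+1) * c (n+2)) := by
    have hsplit : ∀ j : ℕ, ((n:ℝ)+1+l) * (acoef l (n+1) j * (c j + c (j+1)))
        = ((n:ℝ)+1+l) * (acoef l (n+1) j * c j)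
          + ((n:ℝ)+1+l) * (acoef l (n+1) j * c (j+1)) := fun j => by ring
    simp_rw [hsplit]
    rw [Finset.sum_add_distrib,
      Finset.sum_range_succ' (fun j => ((n:ℝ)+1+l) * (acoef l (n+1) j * c j)) (n+1),
      Finset.sum_range_succ (fun j => ((n:ℝ)+1+l) * (acoef l (n+1) j * c (j+1))),
      Finset.sum_add_distrib]
    ring
  rw [e1, e2]
  have hpt : ∀ j ∈ Finset.range (n+1),
      ((n:ℝ)+2) * (acoef l (n+2) (j+1) * c (j+1))
      = (((n:ℝ)+1+l) * (acoef l (n+1) (j+1) * c (j+1))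
          + ((n:ℝ)+1+l) * (acoef l (n+1) j * c (j+1)))
        - ((n:ℝ)+2*l) * (acoef l n j * c (j+1)) := by
    intro j hj
    have hj' : j ≤ n := by have := Finset.mem_range.mp hj; omega
    linear_combination c (j+1) * acoef_rec l n j hj'
  rw [Finset.sum_congr rfl hpt, Finset.sum_sub_distrib]
  have hbl := acoef_left l n
  have hbr := acoef_right l n
  have hms := Finset.mul_sum (Finset.range (n+1)) (fun j => acoef l n j * c (j+1)) ((n:ℝ)+2*l)
  linear_combination c 0 * hbl + c (n+2) * hbr + hms

/-! ### The hypergeometric-type sums -/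

noncomputable def Ssum (l : ℝ) (r : ℕ) (u : ℝ) : ℝ :=
  ∑ s ∈ Finset.range (r + 1), (-1 : ℝ) ^ s * (r.choose s : ℝ) *
    (poch (l + r + 1) s / poch (l + 1 / 2) s) * u ^ s

noncomputable def Esum (l : ℝ) (r : ℕ) (u : ℝ) : ℝ :=
  ∑ s ∈ Finset.range (r + 1), (-1 : ℝ) ^ s * (r.choose s : ℝ) *
    (poch (l + r) s / poch (l + 1 / 2) s) * u ^ s

noncomputable def gc (l : ℝ) (n : ℕ) : ℝ := poch (2 * l) n / n.factorial

lemma gc_succ (l : ℝ) (n : ℕ) : ((n:ℝ) + 1) * gc l (n+1) = (2*l + n) * gc l n := by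
  unfold gc
  rw [poch_succ, Nat.factorial_succ]
  have h1 : (n.factorial : ℝ) ≠ 0 := Nat.cast_ne_zero.2 n.factorial_ne_zero
  push_cast
  field_simp

lemma choose_ratio (r s : ℕ) (hs : s ≤ r + 1) :
    ((r:ℝ) + 1) * (r.choose s : ℝ) = ((r:ℝ) + 1 - s) * ((r+1).choose s : ℝ) := by
  rcases Nat.lt_or_ge s (r+1) with h | h
  · have hs' : s ≤ r := by omega
    have hnat : (r+1) * r.choose s = (r+1).choose s * (r + 1 - s) := by
      rw [Nat.add_one_mul_choose_eq, Nat.choose_succ_right_eq]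
    have := congrArg (fun x : ℕ => (x : ℝ)) hnat
    push_cast [Nat.cast_sub hs] at this
    linarith [this]
  · have hs' : s = r + 1 := by omega
    subst hs'
    simp [Nat.choose_succ_self]

lemma choose_shift (r m : ℕ) (hm : m ≤ r) :
    ((m:ℝ) + 1) * (r.choose (m+1) : ℝ) = ((r:ℝ) - m) * (r.choose m : ℝ) := by
  have h := Nat.choose_succ_right_eq r m
  have := congrArg (fun x : ℕ => (x : ℝ)) h
  push_cast [Nat.cast_sub hm] at this
  linarith [this]

lemma Ssum_ext (l : ℝ) (r : ℕ) (u : ℝ) :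
    Ssum l r u = ∑ s ∈ Finset.range (r + 2), (-1 : ℝ) ^ s * (r.choose s : ℝ) *
      (poch (l + r + 1) s / poch (l + 1 / 2) s) * u ^ s := by
  unfold Ssum
  rw [Finset.sum_range_succ ((fun s => (-1 : ℝ) ^ s * (r.choose s : ℝ) *
      (poch (l + r + 1) s / poch (l + 1 / 2) s) * u ^ s)) (r+1)]
  simp [Nat.choose_succ_self]

lemma Esum_ext (l : ℝ) (r : ℕ) (u : ℝ) :
    Esum l r u = ∑ s ∈ Finset.range (r + 2), (-1 : ℝ) ^ s * (r.choose s : ℝ) *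
      (poch (l + r) s / poch (l + 1 / 2) s) * u ^ s := by
  unfold Esum
  rw [Finset.sum_range_succ ((fun s => (-1 : ℝ) ^ s * (r.choose s : ℝ) *
      (poch (l + r) s / poch (l + 1 / 2) s) * u ^ s)) (r+1)]
  simp [Nat.choose_succ_self]

lemma recS (l : ℝ) (r : ℕ) (u : ℝ) :
    (2*(r:ℝ)+3) * gc l (2*r+3) * Ssum l (r+1) u
      = 2*(2*(r:ℝ)+2+l) * gc l (2*r+2) * Esum l (r+1) u
        - (2*(r:ℝ)+1+2*l) * gc l (2*r+1) * Ssum l r u := by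
  have hg3 : (2*(r:ℝ)+3) * gc l (2*r+3) = (2*l+2*(r:ℝ)+2) * gc l (2*r+2) := by
    have := gc_succ l (2*r+2)
    push_cast at this ⊢
    linarith [this]
  have hg1 : (2*(r:ℝ)+2) * gc l (2*r+2) = (2*l+2*(r:ℝ)+1) * gc l (2*r+1) := by
    have := gc_succ l (2*r+1)
    push_cast at this ⊢
    linarith [this]
  rw [Ssum_ext l r u]
  unfold Ssum Esum
  rw [Finset.mul_sum, Finset.mul_sum, Finset.mul_sum, ← Finset.sum_sub_distrib]
  apply Finset.sum_congr rfl
  intro s hs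
  have hsle : s ≤ r + 1 := by have := Finset.mem_range.mp hs; omega
  have hb := poch_base_mul (l + (r:ℝ) + 1) s
  rw [show ((l + (r:ℝ) + 1) + 1 : ℝ) = l + (r:ℝ) + 2 from by ring] at hb
  have hC := choose_ratio r s hsle
  push_cast
  rw [show (l + ((r:ℝ) + 1) + 1 : ℝ) = l + (r:ℝ) + 2 from by ring,
      show (l + ((r:ℝ) + 1) : ℝ) = l + (r:ℝ) + 1 from by ring]
  linear_combination
    ((-1:ℝ)^s * u^s / poch (l+1/2) s) * (((r+1).choose s : ℝ) * poch (l+(r:ℝ)+2) s) * hg3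
    + ((-1:ℝ)^s * u^s / poch (l+1/2) s) * (2 * gc l (2*r+2) * ((r+1).choose s : ℝ)) * hb
    - ((-1:ℝ)^s * u^s / poch (l+1/2) s) * ((r.choose s : ℝ) * poch (l+(r:ℝ)+1) s) * hg1
    + ((-1:ℝ)^s * u^s / poch (l+1/2) s) * (2 * gc l (2*r+2) * poch (l+(r:ℝ)+1) s) * hC

noncomputable def shf (l : ℝ) (r : ℕ) (u : ℝ) : ℕ → ℝ
  | 0 => 0
  | (m+1) => (-1 : ℝ)^m * (r.choose m : ℝ) * (poch (l + r + 1) m / poch (l + 1/2) m) * u^(m+1)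

lemma recE (l : ℝ) (hl1 : -(1/2 : ℝ) < l) (r : ℕ) (u : ℝ) :
    (2*(r:ℝ)+2) * gc l (2*r+2) * Esum l (r+1) u
      = 2*(2*(r:ℝ)+1+l) * gc l (2*r+1) * ((1-u) * Ssum l r u)
        - (2*(r:ℝ)+2*l) * gc l (2*r) * Esum l r u := by
  have hg2 : (2*(r:ℝ)+2) * gc l (2*r+2) = (2*l+2*(r:ℝ)+1) * gc l (2*r+1) := by
    have := gc_succ l (2*r+1); push_cast at this ⊢; linarith [this]
  have hg0 : (2*(r:ℝ)+1) * gc l (2*r+1) = (2*l+2*(r:ℝ)) * gc l (2*r) := by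
    have := gc_succ l (2*r); push_cast at this ⊢; linarith [this]
  have hshift : u * Ssum l r u = ∑ s ∈ Finset.range (r+2), shf l r u s := by
    rw [Finset.sum_range_succ' (shf l r u) (r+1)]
    have h0 : shf l r u 0 = 0 := rfl
    rw [h0, add_zero]
    unfold Ssum
    rw [Finset.mul_sum]
    apply Finset.sum_congr rfl
    intro s _
    show u * ((-1 : ℝ) ^ s * (r.choose s : ℝ) *
        (poch (l + r + 1) s / poch (l + 1 / 2) s) * u ^ s)
      = (-1 : ℝ)^s * (r.choose s : ℝ) * (poch (l + r + 1) s / poch (l + 1/2) s) * u^(s+1)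
    ring
  have expand : (1-u) * Ssum l r u
      = ∑ s ∈ Finset.range (r+2), ((-1 : ℝ) ^ s * (r.choose s : ℝ) *
          (poch (l + r + 1) s / poch (l + 1 / 2) s) * u ^ s - shf l r u s) := by
    rw [Finset.sum_sub_distrib, ← Ssum_ext, ← hshift]
    ring
  rw [expand, Esum_ext l r u]
  unfold Esum
  rw [Finset.mul_sum, Finset.mul_sum, Finset.mul_sum, ← Finset.sum_sub_distrib]
  apply Finset.sum_congr rfl
  intro s hs
  have hslt : s < r + 2 := Finset.mem_range.mp hs
  cases s with
  | zero =>
    have h0 : shf l r u 0 = 0 := rfl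
    simp [poch_zero, h0]
    linear_combination hg2 - hg0
  | succ m =>
    have hm : m ≤ r := by omega
    have hsh1 : shf l r u (m+1) = (-1 : ℝ) ^ m * (r.choose m : ℝ) *
        (poch (l + r + 1) m / poch (l + 1 / 2) m) * u ^ (m+1) := rfl
    rw [hsh1]
    have hPa : (((r+1).choose (m+1) : ℕ) : ℝ) = (r.choose m : ℝ) + (r.choose (m+1) : ℝ) := by
      rw [Nat.choose_succ_succ]
      push_cast
      ring
    have hsh2 := choose_shift r m hm
    have hQm : poch (l + 1/2) m ≠ 0 := poch_ne_zero (by linarith) m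
    have hV : (l + 1/2 + (m:ℝ)) ≠ 0 := by
      have h : (0:ℝ) ≤ m := Nat.cast_nonneg m
      intro hcon; nlinarith
    have hfrac : poch (l + (r:ℝ) + 1) m / poch (l + 1/2) m
        = poch (l + (r:ℝ) + 1) m * (l + 1/2 + (m:ℝ)) / poch (l + 1/2) (m+1) := by
      rw [poch_succ (l + 1/2) m, mul_div_mul_right _ _ hV]
    push_cast
    rw [show (l + ((r:ℝ)+1) : ℝ) = l + (r:ℝ) + 1 from by ring]
    rw [poch_succ (l + (r:ℝ) + 1) m]
    rw [poch_succ_left (l + (r:ℝ)) m]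
    rw [show ((l + (r:ℝ)) + 1 : ℝ) = l + (r:ℝ) + 1 from by ring]
    rw [hfrac]
    linear_combination
      (-((-1:ℝ)^m * u^(m+1) / poch (l+1/2) (m+1)) * (l+(r:ℝ)+1+(m:ℝ))
          * (((r+1).choose (m+1) : ℝ)) * poch (l+(r:ℝ)+1) m) * hg2
      + (((-1:ℝ)^m * u^(m+1) / poch (l+1/2) (m+1)) * (r.choose (m+1) : ℝ)
          * (l+(r:ℝ)) * poch (l+(r:ℝ)+1) m) * hg0
      + (-((-1:ℝ)^m * u^(m+1) / poch (l+1/2) (m+1)) * (2*l+2*(r:ℝ)+1) * gc l (2*r+1)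
          * (l+(r:ℝ)+1+(m:ℝ)) * poch (l+(r:ℝ)+1) m) * hPa
      + (((-1:ℝ)^m * u^(m+1) / poch (l+1/2) (m+1)) * (2*(r:ℝ)+1) * gc l (2*r+1)
          * poch (l+(r:ℝ)+1) m) * hsh2

/-! ### The main identity -/

lemma main_id (l : ℝ) (hl1 : -(1/2 : ℝ) < l) : ∀ r : ℕ,
    (∀ θ : ℝ, Xc l (2*r) θ = gc l (2*r) * Esum l r (Real.sin θ ^ 2))
    ∧ (∀ θ : ℝ, Xc l (2*r+1) θ
        = gc l (2*r+1) * (Real.cos θ * Ssum l r (Real.sin θ ^ 2))) := by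
  intro r
  induction r with
  | zero =>
    constructor
    · intro θ
      simp [Xc, acoef, Esum, gc, poch_zero]
    · intro θ
      have h1 : Xc l 1 θ = acoef l 1 0 * Real.cos (((1:ℝ) - 0) * θ)
          + acoef l 1 1 * Real.cos (((1:ℝ) - 2) * θ) := by
        unfold Xc
        rw [show (1:ℕ)+1 = 2 from rfl, Finset.sum_range_succ, Finset.sum_range_succ,
          Finset.sum_range_zero]
        norm_num
      rw [h1]
      have ha0 : acoef l 1 0 = l := by
        unfold acoef; simp [poch_zero, poch_one]
      have ha1 : acoef l 1 1 = l := by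
        unfold acoef; simp [poch_zero, poch_one]
      have hS0 : Ssum l 0 (Real.sin θ ^ 2) = 1 := by
        unfold Ssum; simp [poch_zero]
      have hg1 : gc l 1 = 2 * l := by
        unfold gc; simp [poch_one]
      rw [ha0, ha1, hS0, hg1]
      have : ((1:ℝ) - 2) * θ = -((1 - 0) * θ) := by ring
      rw [this, Real.cos_neg]
      ring
  | succ r ih =>
    obtain ⟨hE, hS⟩ := ih
    have hcos2 : ∀ θ : ℝ, 1 - Real.sin θ ^ 2 = Real.cos θ ^ 2 := by
      intro θ; rw [Real.sin_sq]; ring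
    have hE' : ∀ θ : ℝ, Xc l (2*(r+1)) θ = gc l (2*(r+1)) * Esum l (r+1) (Real.sin θ ^ 2) := by
      intro θ
      have hidx : 2*(r+1) = 2*r+2 := by ring
      rw [hidx]
      have hrec := rec_X l (2*r) θ
      rw [hE θ, hS θ] at hrec
      have hre := recE l hl1 r (Real.sin θ ^ 2)
      rw [hcos2 θ] at hre
      have hpos : ((2*r : ℕ):ℝ) + 2 ≠ 0 := by positivity
      apply mul_left_cancel₀ hpos
      rw [hrec]
      push_cast
      push_cast at hre
      linear_combination -hre
    have hS' : ∀ θ : ℝ, Xc l (2*(r+1)+1) θ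
        = gc l (2*(r+1)+1) * (Real.cos θ * Ssum l (r+1) (Real.sin θ ^ 2)) := by
      intro θ
      have hidx : 2*(r+1)+1 = (2*r+1)+2 := by ring
      rw [hidx]
      have hrec := rec_X l (2*r+1) θ
      have hidx2 : 2*r+1+1 = 2*(r+1) := by ring
      rw [hidx2] at hrec
      rw [hE' θ, hS θ] at hrec
      have hrs := recS l r (Real.sin θ ^ 2)
      have hpos : ((2*r+1 : ℕ):ℝ) + 2 ≠ 0 := by positivity
      apply mul_left_cancel₀ hpos
      rw [hrec]
      have hidx3 : 2*(r+1) = 2*r+2 := by ring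
      have hidx4 : 2*r+1+2 = 2*r+3 := by ring
      rw [hidx3, hidx4]
      push_cast
      push_cast at hrs
      linear_combination (-Real.cos θ) * hrs
    exact ⟨hE', hS'⟩

/-! ### Final assembly -/

/-- for -1/2 < lambda < 0, the polynomial q_{2r+1}(., lambda) is negative
at the local minima of the Chebyshev polynomial T_{2r+1}. -/
theorem stmt11 (r : ℕ) (hr : 1 ≤ r) (l : ℝ) (hl1 : -(1 / 2 : ℝ) < l) (hl2 : l < 0)
    (k : ℕ) (hk : k ≤ r - 1) :
    qOdd r l (Real.cos ((2 * k + 1) * Real.pi / (2 * r + 1))) < 0 := by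
  set θ : ℝ := (2 * k + 1) * Real.pi / (2 * r + 1) with hθdef
  have hden : (0:ℝ) < 2 * r + 1 := by positivity
  have hknum : (2:ℝ) * k + 1 < 2 * r + 1 := by
    have : k + 1 ≤ r := by omega
    have : (k:ℝ) + 1 ≤ r := by exact_mod_cast this
    linarith
  have hθpos : 0 < θ := by
    apply div_pos
    · have : (0:ℝ) < 2*k+1 := by positivity
      exact mul_pos this Real.pi_pos
    · exact hden
  have hθmul : (2 * (r:ℝ) + 1) * θ = (2 * k + 1) * Real.pi := by
    rw [hθdef]
    field_simp
  -- the identity at θ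
  obtain ⟨_, hS⟩ := main_id l hl1 r
  have hgneg : gc l (2*r+1) < 0 := by
    unfold gc
    apply div_neg_of_neg_of_pos
    · have := poch_succ_left (2*l) (2*r)
      rw [show 2*r+1 = (2*r)+1 from rfl, this]
      have hp : 0 < poch (2*l + 1) (2*r) := poch_pos (by linarith) _
      exact mul_neg_of_neg_of_pos (by linarith) hp
    · exact_mod_cast Nat.cast_pos.2 (2*r+1).factorial_pos
  have hgne : gc l (2*r+1) ≠ 0 := hgneg.ne
  -- gc = sum of acoef
  have hXzero : Xc l (2*r+1) 0 = gc l (2*r+1) := by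
    have := hS 0
    simp only [Real.sin_zero, Real.cos_zero] at this
    rw [this]
    have hS0 : Ssum l r ((0:ℝ) ^ 2) = 1 := by
      unfold Ssum
      rw [Finset.sum_eq_single 0]
      · simp [poch_zero]
      · intro s _ hs0
        have hbase : ((0:ℝ)^2) = 0 := by norm_num
        rw [hbase, zero_pow hs0, mul_zero]
      · intro h; simp at h
    rw [hS0]
    ring
  have hXsum : Xc l (2*r+1) 0 = ∑ j ∈ Finset.range (2*r+2), acoef l (2*r+1) j := by
    unfold Xc
    apply Finset.sum_congr rfl
    intro j _
    rw [mul_zero, Real.cos_zero, mul_one]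
  -- rewrite Xc at θ
  have hcosarg : ∀ j : ℕ, Real.cos ((((2*r+1:ℕ):ℝ) - 2*j) * θ) = - Real.cos (2*j*θ) := by
    intro j
    have harg : (((2*r+1:ℕ):ℝ) - 2*j) * θ = (2*k+1) * Real.pi - 2*j*θ := by
      push_cast
      rw [← hθmul]
      ring
    rw [harg, Real.cos_sub]
    have hcospi : Real.cos ((2*(k:ℝ)+1) * Real.pi) = -1 := by
      rw [show (2*(k:ℝ)+1) * Real.pi = (k:ℝ) * (2*Real.pi) + Real.pi from by ring]
      exact Real.cos_nat_mul_two_pi_add_pi k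
    have hsinpi : Real.sin ((2*(k:ℝ)+1) * Real.pi) = 0 := by
      rw [show (2*(k:ℝ)+1) * Real.pi = ((2*k+1 : ℤ):ℝ) * Real.pi from by push_cast; ring]
      exact Real.sin_int_mul_pi _
    rw [hcospi, hsinpi]
    ring
  have hXθ : Xc l (2*r+1) θ = ∑ j ∈ Finset.range (2*r+2), acoef l (2*r+1) j * (- Real.cos (2*j*θ)) := by
    unfold Xc
    apply Finset.sum_congr rfl
    intro j _
    rw [hcosarg j]
  -- numerator positivity
  have hgsum : gc l (2*r+1) = ∑ j ∈ Finset.range (2*r+2), acoef l (2*r+1) j := by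
    rw [← hXzero, hXsum]
  have hnum : 0 < gc l (2*r+1) + Xc l (2*r+1) θ := by
    rw [hXθ, hgsum, ← Finset.sum_add_distrib]
    have hterm : ∀ j ∈ Finset.range (2*r+2),
        0 ≤ acoef l (2*r+1) j + acoef l (2*r+1) j * (- Real.cos (2*j*θ)) := by
      intro j hj
      have hjlt : j < 2*r+2 := Finset.mem_range.mp hj
      rcases Nat.eq_zero_or_pos j with hj0 | hjpos
      · subst hj0
        simp
      rcases Nat.lt_or_ge j (2*r+1) with hjlt' | hjge
      · -- 1 ≤ j ≤ 2r : acoef > 0 and factor ≥ 0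
        have hac : 0 < acoef l (2*r+1) j := by
          unfold acoef
          apply div_pos
          · obtain ⟨j', rfl⟩ : ∃ j', j = j'+1 := ⟨j-1, by omega⟩
            have h1 : poch l (j'+1) < 0 := poch_neg hl2 (by linarith) j'
            obtain ⟨m', hm'⟩ : ∃ m', 2*r+1 - (j'+1) = m'+1 := ⟨2*r+1-(j'+1)-1, by omega⟩
            rw [hm']
            have h2 : poch l (m'+1) < 0 := poch_neg hl2 (by linarith) m'
            exact mul_pos_of_neg_of_neg h1 h2
          · positivity
        have hcle : Real.cos (2*j*θ) ≤ 1 := Real.cos_le_one _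
        nlinarith
      · -- j = 2r+1: cos(2jθ) = 1, term = 0
        have hj' : j = 2*r+1 := by omega
        subst hj'
        have : Real.cos (2*((2*r+1:ℕ):ℝ)*θ) = 1 := by
          rw [show (2*((2*r+1:ℕ):ℝ)*θ) = ((2*k+1:ℕ):ℝ) * (2*Real.pi) from by
            push_cast
            push_cast at hθmul
            nlinarith [hθmul]]
          exact Real.cos_nat_mul_two_pi _
        rw [this]
        simp
    have hone : 0 < acoef l (2*r+1) 1 + acoef l (2*r+1) 1 * (- Real.cos (2*((1:ℕ):ℝ)*θ)) := by
      push_cast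
      have hac : 0 < acoef l (2*r+1) 1 := by
        unfold acoef
        apply div_pos
        · have h1 : poch l 1 < 0 := by rw [poch_one]; exact hl2
          obtain ⟨m', hm'⟩ : ∃ m', 2*r+1-1 = m'+1 := ⟨2*r-1, by omega⟩
          rw [hm']
          have h2 : poch l (m'+1) < 0 := poch_neg hl2 (by linarith) m'
          exact mul_pos_of_neg_of_neg h1 h2
        · positivity
      have hcos1 : Real.cos (2*1*θ) < 1 := by
        have h2θpos : 0 < 2*θ := by linarith
        have hθlt : θ < Real.pi := by
          rw [hθdef]
          rw [div_lt_iff₀ hden]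
          nlinarith [Real.pi_pos]
        have h2θlt : 2*θ < 2*Real.pi := by linarith
        have hne : Real.cos (2*θ) ≠ 1 := by
          intro hcon
          have := (Real.cos_eq_one_iff_of_lt_of_lt (by linarith) h2θlt).mp hcon
          linarith
        have hle := Real.cos_le_one (2*θ)
        have : (2:ℝ)*1*θ = 2*θ := by ring
        rw [this]
        exact lt_of_le_of_ne hle hne
      nlinarith
    have h1mem : (1:ℕ) ∈ Finset.range (2*r+2) := Finset.mem_range.mpr (by omega)
    calc (0:ℝ) = ∑ _j ∈ Finset.range (2*r+2), (0:ℝ) := by simp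
    _ < ∑ j ∈ Finset.range (2*r+2),
        (acoef l (2*r+1) j + acoef l (2*r+1) j * (- Real.cos (2*j*θ))) := by
      apply Finset.sum_lt_sum hterm
      exact ⟨1, h1mem, hone⟩
  -- conclude
  have hq : qOdd r l (Real.cos θ) = 1 + Real.cos θ * Ssum l r (1 - Real.cos θ ^ 2) := rfl
  rw [hq]
  have hsin : 1 - Real.cos θ ^ 2 = Real.sin θ ^ 2 := by
    rw [Real.sin_sq]
  rw [hsin]
  have hfromS : Real.cos θ * Ssum l r (Real.sin θ ^ 2) = Xc l (2*r+1) θ / gc l (2*r+1) := by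
    rw [hS θ]
    field_simp
  rw [hfromS]
  have : 1 + Xc l (2*r+1) θ / gc l (2*r+1)
      = (gc l (2*r+1) + Xc l (2*r+1) θ) / gc l (2*r+1) := by
    field_simp
  rw [this]
  exact div_neg_of_pos_of_neg hnum hgneg
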